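/- arXiv:0711.1160 — 3 statements merged into one kernel-verified Lean document; each statement's English description precedes it below -/
import Mathlib

section
/- For all integers n ≥ 2 and x ≥ 3, Y_n(x) = Y_{x-1}(n+1), where Y_m(y) := Σ_{i=2}^{y-1} [ C(m+y-2, m-1) − C(m+y−i−1, m−1) ]. In particular, the free groups B_nT and B_{n'}T' of radial trees with parameters (n, x) and (n' = x−1, x' = n+1) have equal rank. -/
/-!
With `N = n + x - 2`, the hockey-stick identity gives the closed form
`Y n x = (x - 2) C(N, n-1) - C(N, n) + 1`. The substitution `(n, x) ↦ (x - 1, n + 1)` keeps `N`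
and, by `C(N, k) = C(N, N - k)`, exchanges `C(N, n-1)` and `C(N, n)`, so the symmetry reduces to
the absorption identity `(x - 1) C(N, n-1) = n C(N, n)`.
-/

/-- `Y n x = Σ_{i=2}^{x-1} ( C(n+x-2, n-1) − C(n+x−i−1, n−1) )`, the rank of the
`n`-strand braid group of a radial tree whose essential vertex has degree `x`. -/
def Y (n x : ℕ) : ℕ :=
  ∑ i ∈ Finset.Icc 2 (x - 1), (Nat.choose (n + x - 2) (n - 1) - Nat.choose (n + x - i - 1) (n - 1))

open Finset

lemma Y_succ_succ_eq_sum_range (m k : ℕ) :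
    Y (m + 1) (k + 2) = ∑ i ∈ range k, ((m + k + 1).choose m - (i + 1 + m).choose m) := by
  rw [Y, show k + 2 - 1 = k + 1 by omega, ← Ico_add_one_right_eq_Icc, sum_Ico_eq_sum_range,
    show k + 1 + 1 - 2 = k by omega, ← sum_range_reflect]
  refine sum_congr rfl fun i hi => ?_
  have hi : i < k := mem_range.mp hi
  congr 2 <;> omega

lemma Y_succ_succ_add_choose (m k : ℕ) :
    Y (m + 1) (k + 2) + (m + k + 1).choose (m + 1) = k * (m + k + 1).choose m + 1 := by
  have hockey := Nat.sum_range_add_choose k m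
  rw [sum_range_succ', zero_add, Nat.choose_self, add_comm k m] at hockey
  have hsplit :
      Y (m + 1) (k + 2) + ∑ i ∈ range k, (i + 1 + m).choose m = k * (m + k + 1).choose m := by
    rw [Y_succ_succ_eq_sum_range, ← sum_add_distrib, sum_congr rfl fun i hi =>
      Nat.sub_add_cancel (Nat.choose_le_choose m (by rw [mem_range] at hi; omega)),
      sum_const, card_range, smul_eq_mul]
  omega

lemma Y_succ_succ_symm (m k : ℕ) : Y (m + 1) (k + 2) = Y (k + 1) (m + 2) := by
  have hmk := Y_succ_succ_add_choose m k
  have hkm := Y_succ_succ_add_choose k m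
  have absorb : (m + k + 1).choose (m + 1) * (m + 1) = (m + k + 1).choose m * (k + 1) := by
    rw [Nat.choose_succ_right_eq, show m + k + 1 - m = k + 1 by omega]
  rw [add_comm k m, Nat.choose_symm_of_eq_add (by ring : m + k + 1 = (k + 1) + m),
    Nat.choose_symm_of_eq_add (by ring : m + k + 1 = k + (m + 1))] at hkm
  linarith

theorem Y_symmetry (n x : ℕ) (hn : 2 ≤ n) (hx : 3 ≤ x) : Y n x = Y (x - 1) (n + 1) := by
  obtain ⟨m, rfl⟩ : ∃ m, n = m + 1 := ⟨n - 1, by omega⟩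
  obtain ⟨k, rfl⟩ : ∃ k, x = k + 2 := ⟨x - 2, by omega⟩
  exact Y_succ_succ_symm m k
end

section
/- For fixed n ≥ 4, the map sending an integer x ≥ 3 to Y_n(x) is injective, where Y_n(x) := Σ_{i=2}^{x-1} [ C(n+x-2, n-1) − C(n+x−i−1, n−1) ]. Consequently, a free tree braid group of known rank r = Y_n(x) on a known number n ≥ 4 of strands uniquely determines the degree x of the essential vertex of the radial defining tree. -/
open Finset

theorem Nat.choose_lt_choose_succ_left {m r : ℕ} (h : r ≤ m) :
    m.choose (r + 1) < (m + 1).choose (r + 1) := by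
  rw [Nat.choose_succ_succ']
  have := Nat.choose_pos h
  omega

theorem Y_add_two (n x : ℕ) :
    Y n (x + 2) = ∑ k ∈ range x, ((n + x).choose (n - 1) - (n + k).choose (n - 1)) := by
  refine sum_nbij' (fun i => x + 1 - i) (fun k => x + 1 - k) ?_ ?_ ?_ ?_ ?_
  all_goals intro i hi; simp only [mem_Icc, mem_range] at hi ⊢
  any_goals omega
  rw [show n + (x + 2) - 2 = n + x by omega, show n + (x + 2) - i - 1 = n + (x + 1 - i) by omega]

theorem strictMono_Y_add_two {n : ℕ} (hn : 2 ≤ n) : StrictMono fun x => Y n (x + 2) := by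
  refine strictMono_nat_of_lt_succ fun x => ?_
  simp only [Y_add_two, sum_range_succ]
  have hgrow : ∑ k ∈ range x, ((n + x).choose (n - 1) - (n + k).choose (n - 1)) ≤
      ∑ k ∈ range x, ((n + (x + 1)).choose (n - 1) - (n + k).choose (n - 1)) :=
    sum_le_sum fun k _ => Nat.sub_le_sub_right (Nat.choose_le_choose _ (by omega)) _
  have hnew : (n + x).choose (n - 1) < (n + (x + 1)).choose (n - 1) := by
    rw [show n - 1 = n - 2 + 1 by omega, ← add_assoc]
    exact Nat.choose_lt_choose_succ_left (by omega)
  omega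

theorem Y_injective_in_x (n : ℕ) (hn : 4 ≤ n) :
    ∀ x x' : ℕ, 3 ≤ x → 3 ≤ x' → Y n x = Y n x' → x = x' := by
  intro x x' hx hx' h
  obtain ⟨a, rfl⟩ := Nat.exists_eq_add_of_le' (by omega : 2 ≤ x)
  obtain ⟨b, rfl⟩ := Nat.exists_eq_add_of_le' (by omega : 2 ≤ x')
  rw [(strictMono_Y_add_two (by omega)).injective h]
end

section
/- Let T be a finite tree and let v be an extremal essential vertex of T (essential meaning degree ≥ 3, and extremal meaning adjacent to exactly one other essential vertex, where adjacency of essential vertices means the connecting path contains no other essential vertex). Then there is a single edge direction d at v such that every essential vertex of T other than v itself lies in direction d from v; that is, all other essential vertices lie in the same connected component of T − v. -/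
variable {V : Type*} [Fintype V] [DecidableEq V]

/-- A vertex of a graph is essential if it has degree at least 3. -/
def Essential (G : SimpleGraph V) [DecidableRel G.Adj] (v : V) : Prop :=
  3 ≤ G.degree v

/-- Two essential vertices are adjacent (as essential vertices) if some (equivalently, the
unique) simple path between them passes through no other essential vertex. -/
def EssAdj (G : SimpleGraph V) [DecidableRel G.Adj] (u v : V) : Prop :=
  u ≠ v ∧ Essential G u ∧ Essential G v ∧
    ∃ p : G.Walk u v, p.IsPath ∧ ∀ w ∈ p.support, Essential G w → w = u ∨ w = v

/-- An essential vertex is extremal if it is adjacent to exactly one other essential vertex. -/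
def ExtremalVx (G : SimpleGraph V) [DecidableRel G.Adj] (v : V) : Prop :=
  Essential G v ∧ ∃! w : V, EssAdj G v w

set_option linter.unusedSectionVars false in
/-- A walk avoiding `v` gives reachability in the graph with `v` removed. -/
lemma reach_avoid (G : SimpleGraph V) (v : V) {a b : V} (p : G.Walk a b)
    (ha : a ≠ v) (hb : b ≠ v) (h : v ∉ p.support) :
    (G.induce {u | u ≠ v}).Reachable ⟨a, ha⟩ ⟨b, hb⟩ := by
  induction p with
  | nil => exact SimpleGraph.Reachable.refl _
  | @cons a c b hadj q ih =>
    simp only [SimpleGraph.Walk.support_cons, List.mem_cons] at h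
    push_neg at h
    have hc : c ≠ v := fun h' => h.2 (h' ▸ q.start_mem_support)
    have : (G.induce {u | u ≠ v}).Adj ⟨a, ha⟩ ⟨c, hc⟩ := hadj
    exact this.reachable.trans (ih hc hb h.2)

/-- Along any path from `v` to an essential vertex `u ≠ v`, the first essential vertex `x`
after `v` is Ess-adjacent to `v`, and `u` is reachable from `x` avoiding `v`. -/
lemma key (G : SimpleGraph V) [DecidableRel G.Adj] (v : V) (hv : Essential G v) :
    ∀ (n : ℕ) (u : V) (hu : u ≠ v), Essential G u → ∀ p : G.Walk v u, p.IsPath →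
      p.length ≤ n →
    ∃ (x : V) (hx : x ≠ v), EssAdj G v x ∧
      (G.induce {u | u ≠ v}).Reachable ⟨u, hu⟩ ⟨x, hx⟩ := by
  intro n
  induction n with
  | zero =>
    intro u hu _ p _ hlen
    exact absurd (p.eq_of_length_eq_zero (Nat.le_zero.mp hlen)) hu.symm
  | succ n ih =>
    intro u hu hess p hp hlen
    by_cases hmid : ∃ y ∈ p.support, y ≠ v ∧ y ≠ u ∧ Essential G y
    · obtain ⟨y, hyp, hyv, hyu, hyess⟩ := hmid
      have hqr := p.take_spec hyp
      set q := p.takeUntil y hyp with hqdef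
      set r := p.dropUntil y hyp with hrdef
      have hq : q.IsPath := hp.takeUntil hyp
      have hrlen : 0 < r.length := by
        rcases Nat.eq_zero_or_pos r.length with h0 | h0
        · exact absurd (r.eq_of_length_eq_zero h0) hyu
        · exact h0
      have hlq : q.length ≤ n := by
        have : q.length + r.length = p.length := by
          rw [← SimpleGraph.Walk.length_append, hqr]
        omega
      obtain ⟨x, hx, hadj, hreach⟩ := ih y hyv hyess q hq hlq
      have hvr : v ∉ r.support := by
        intro hvr
        have hnd : (q.support ++ r.support.tail).Nodup := by
          rw [← SimpleGraph.Walk.support_append, hqr]; exact hp.support_nodup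
        rw [SimpleGraph.Walk.support_eq_cons r] at hvr
        rcases List.mem_cons.mp hvr with h1 | h1
        · exact hyv h1.symm
        · exact (List.disjoint_of_nodup_append hnd) q.start_mem_support h1
      exact ⟨x, hx, hadj, ((reach_avoid G v r hyv hu hvr).symm).trans hreach⟩
    · push_neg at hmid
      refine ⟨u, hu, ⟨hu.symm, hv, hess, p, hp, ?_⟩, SimpleGraph.Reachable.refl _⟩
      intro w hw hwess
      by_contra hc
      push_neg at hc
      exact hmid w hw hc.1 hc.2 hwess

/-- If `v` is an extremal essential vertex of a finite tree, then all essential vertices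
other than `v` lie in a single connected component of `T − v`; equivalently, they all lie
in a single direction from `v`. -/
theorem extremal_one_direction (G : SimpleGraph V) [DecidableRel G.Adj]
    (hconn : G.Connected) (hacyc : G.IsAcyclic) (v : V) (hv : ExtremalVx G v) :
    ∃ c : (G.induce {u | u ≠ v}).ConnectedComponent,
      ∀ w : V, ∀ hw : w ≠ v, Essential G w →
        (G.induce {u | u ≠ v}).connectedComponentMk ⟨w, hw⟩ = c := by
  obtain ⟨hvess, w0, hw0, huniq⟩ := hv
  have hw0v : w0 ≠ v := hw0.1.symm
  refine ⟨(G.induce {u | u ≠ v}).connectedComponentMk ⟨w0, hw0v⟩, ?_⟩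
  intro u hu huess
  obtain ⟨p0⟩ := hconn.preconnected v u
  have hp : (p0.toPath : G.Walk v u).IsPath := p0.toPath.property
  obtain ⟨x, hx, hadj, hreach⟩ :=
    key G v hvess (p0.toPath : G.Walk v u).length u hu huess _ hp le_rfl
  have hxw : x = w0 := huniq x hadj
  subst hxw
  exact SimpleGraph.ConnectedComponent.sound hreach
end
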